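/- If A and B are closed under stuttering, then ◇(↑A ∧ ○B) is closed under stuttering, where ↑A := ¬A ∧ ○A. -/

import Mathlib

def State := String → Bool

def StSeq := ℕ → State

def drop (k : ℕ) (s : StSeq) : StSeq := fun n => s (k + n)

def stutter (s : StSeq) (i : ℕ) : StSeq := fun n => if n ≤ i then s n else s (n - 1)

def CUS (F : StSeq → Prop) : Prop := ∀ (s : StSeq) (i : ℕ), F s ↔ F (stutter s i)

def Var (a : String) : StSeq → Prop := fun s => s 0 a = true

def Not' (F : StSeq → Prop) : StSeq → Prop := fun s => ¬ F s

def And' (F G : StSeq → Prop) : StSeq → Prop := fun s => F s ∧ G s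

def Or' (F G : StSeq → Prop) : StSeq → Prop := fun s => F s ∨ G s

def Imp' (F G : StSeq → Prop) : StSeq → Prop := fun s => F s → G s

def Iff' (F G : StSeq → Prop) : StSeq → Prop := fun s => F s ↔ G s

def Next (F : StSeq → Prop) : StSeq → Prop := fun s => F (drop 1 s)

def Always (F : StSeq → Prop) : StSeq → Prop := fun s => ∀ k, F (drop k s)

def Ev (F : StSeq → Prop) : StSeq → Prop := fun s => ∃ k, F (drop k s)

def Until' (F G : StSeq → Prop) : StSeq → Prop :=
  fun s => ∃ k, G (drop k s) ∧ ∀ j < k, F (drop j s)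

def Up (F : StSeq → Prop) : StSeq → Prop := And' (Not' F) (Next F)

def Down (F : StSeq → Prop) : StSeq → Prop := And' F (Next (Not' F))

def AnyEdge (F : StSeq → Prop) : StSeq → Prop := Or' (Up F) (Down F)


/-!
A stutter step at position `i` only shifts the suffixes starting after `i` by one and
stutters the suffixes starting at or before `i`. Hence a witness `k` of `◇G` survives
stuttering (shifted by one if it lies beyond `i`), provided `G` is insensitive to stuttering
everywhere except at its own first state. `↑A ∧ ○B` is such a `G`: the closure of `A` and `B`
under stuttering handles positions `≥ 1`, and `↑A` is false on a sequence whose first state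
is repeated, since `¬A` and `○A` then speak about the same sequence up to stuttering.
-/

@[simp]
lemma drop_zero (s : StSeq) : drop 0 s = s := by
  funext n
  simp [drop]

lemma drop_succ_stutter_of_le {s : StSeq} {i k : ℕ} (h : i ≤ k) :
    drop (k + 1) (stutter s i) = drop k s := by
  funext n
  simp only [drop, stutter]
  rw [if_neg (by omega)]
  congr 1
  omega

lemma drop_stutter_of_le {s : StSeq} {i k : ℕ} (h : k ≤ i) :
    drop k (stutter s i) = stutter (drop k s) (i - k) := by
  funext n
  simp only [drop, stutter]
  split_ifs <;> first | rfl | omega | (congr 1; omega)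

lemma drop_one_stutter_succ (s : StSeq) (i : ℕ) :
    drop 1 (stutter s (i + 1)) = stutter (drop 1 s) i := by
  simpa using drop_stutter_of_le (s := s) (Nat.le_add_left 1 i)

lemma CUS.not {F : StSeq → Prop} (hF : CUS F) : CUS (Not' F) :=
  fun s i => not_congr (hF s i)

lemma CUS.next_stutter_succ {F : StSeq → Prop} (hF : CUS F) (s : StSeq) (i : ℕ) :
    Next F (stutter s (i + 1)) ↔ Next F s := by
  simp only [Next, drop_one_stutter_succ]
  exact (hF _ i).symm

lemma CUS.not_up_stutter_zero {F : StSeq → Prop} (hF : CUS F) (s : StSeq) :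
    ¬ Up F (stutter s 0) := by
  rintro ⟨hnot, hnext⟩
  have hs : drop 1 (stutter s 0) = s := by
    simpa using drop_succ_stutter_of_le (s := s) (le_refl 0)
  exact hnot ((hF s 0).mp (hs ▸ hnext))

lemma drop_stutter_iff_of_lt {G : StSeq → Prop} (hsucc : ∀ s i, G (stutter s (i + 1)) ↔ G s)
    {s : StSeq} {i k : ℕ} (h : k < i) :
    G (drop k (stutter s i)) ↔ G (drop k s) := by
  obtain ⟨j, hj⟩ : ∃ j, i - k = j + 1 := ⟨i - k - 1, by omega⟩
  rw [drop_stutter_of_le h.le, hj, hsucc]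

lemma cus_ev_of_stutter_succ_iff {G : StSeq → Prop}
    (hsucc : ∀ s i, G (stutter s (i + 1)) ↔ G s) (hzero : ∀ s, G (stutter s 0) → G s) :
    CUS (Ev G) := by
  intro s i
  constructor
  · rintro ⟨k, hk⟩
    rcases lt_or_ge k i with hki | hik
    · exact ⟨k, (drop_stutter_iff_of_lt hsucc hki).mpr hk⟩
    · exact ⟨k + 1, by rwa [drop_succ_stutter_of_le hik]⟩
  · rintro ⟨k, hk⟩
    rcases lt_trichotomy k i with hki | rfl | hik
    · exact ⟨k, (drop_stutter_iff_of_lt hsucc hki).mp hk⟩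
    · rw [drop_stutter_of_le le_rfl, Nat.sub_self] at hk
      exact ⟨k, hzero _ hk⟩
    · obtain ⟨k, rfl⟩ := Nat.exists_eq_add_of_lt hik
      exact ⟨i + k, by rwa [drop_succ_stutter_of_le (Nat.le_add_right i k)] at hk⟩

theorem prop1_simple2 (A B : StSeq → Prop) (hA : CUS A) (hB : CUS B) :
    CUS (Ev (And' (Up A) (Next B))) := by
  refine cus_ev_of_stutter_succ_iff (fun s i => ?_)
    (fun s h => absurd h.1 (hA.not_up_stutter_zero s))
  simp only [And', Up]
  rw [hA.not s (i + 1), hA.next_stutter_succ, hB.next_stutter_succ]
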